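/- With the notation of the symmetrized KL identity, the symmetrized KL divergence admits the bound D_KL(π̃^d ‖ π^d) + D_KL(π^d ‖ π̃^d) ≤ (|γ − γ̃| / (γ γ̃)) ∫_Γ exp(−Ψ) |Ψ − Ψ̃| π dz + (1/γ̃) ∫_Γ |exp(−Ψ̃) − exp(−Ψ)| |Ψ − Ψ̃| π dz. -/

import Mathlib

open MeasureTheory

private lemma integrable_of_bdd {Ω : Type*} [MeasurableSpace Ω] {μ : Measure Ω}
    [IsProbabilityMeasure μ] {h : Ω → ℝ} (hm : Measurable h) {M : ℝ}
    (hb : ∀ z, |h z| ≤ M) : Integrable h μ :=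
  ⟨hm.aestronglyMeasurable, HasFiniteIntegral.of_bounded (C := M) (Filter.Eventually.of_forall hb)⟩

/-- Bound on the symmetrized KL divergence:
`D_KL(π̃^d‖π^d) + D_KL(π^d‖π̃^d)
  ≤ (|γ − γ̃|/(γγ̃)) ∫ exp(−Ψ)|Ψ − Ψ̃| dμ + (1/γ̃) ∫ |exp(−Ψ̃) − exp(−Ψ)||Ψ − Ψ̃| dμ`. -/
theorem symmetrized_kl_bound
    {Ω : Type*} [MeasurableSpace Ω] (μ : Measure Ω) [IsProbabilityMeasure μ]
    (Ψ Ψt : Ω → ℝ) (C : ℝ) (hΨ : Measurable Ψ) (hΨt : Measurable Ψt)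
    (hΨ0 : ∀ z, 0 ≤ Ψ z) (hΨt0 : ∀ z, 0 ≤ Ψt z)
    (hΨb : ∀ z, Ψ z ≤ C) (hΨtb : ∀ z, Ψt z ≤ C)
    (γ γt : ℝ) (hγ : γ = ∫ z, Real.exp (-(Ψ z)) ∂μ)
    (hγt : γt = ∫ z, Real.exp (-(Ψt z)) ∂μ) :
    (∫ z, (Real.exp (-(Ψt z)) / γt) *
        Real.log ((Real.exp (-(Ψt z)) / γt) / (Real.exp (-(Ψ z)) / γ)) ∂μ) +
      (∫ z, (Real.exp (-(Ψ z)) / γ) *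
        Real.log ((Real.exp (-(Ψ z)) / γ) / (Real.exp (-(Ψt z)) / γt)) ∂μ)
    ≤ |γ - γt| / (γ * γt) * ∫ z, Real.exp (-(Ψ z)) * |Ψ z - Ψt z| ∂μ +
      (1 / γt) * ∫ z, |Real.exp (-(Ψt z)) - Real.exp (-(Ψ z))| * |Ψ z - Ψt z| ∂μ := by
  set f : Ω → ℝ := fun z => Real.exp (-(Ψ z)) with hf
  set g : Ω → ℝ := fun z => Real.exp (-(Ψt z)) with hg
  have hfpos : ∀ z, 0 < f z := fun z => Real.exp_pos _
  have hgpos : ∀ z, 0 < g z := fun z => Real.exp_pos _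
  have hf1 : ∀ z, f z ≤ 1 := fun z => Real.exp_le_one_iff.2 (by linarith [hΨ0 z])
  have hg1 : ∀ z, g z ≤ 1 := fun z => Real.exp_le_one_iff.2 (by linarith [hΨt0 z])
  have hfm : Measurable f := (hΨ.neg).exp
  have hgm : Measurable g := (hΨt.neg).exp
  have hfint : Integrable f μ := integrable_of_bdd hfm (M := 1)
    (fun z => by rw [abs_of_pos (hfpos z)]; exact hf1 z)
  have hgint : Integrable g μ := integrable_of_bdd hgm (M := 1)
    (fun z => by rw [abs_of_pos (hgpos z)]; exact hg1 z)
  have hΨdiff_bd : ∀ z, |Ψ z - Ψt z| ≤ C := by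
    intro z
    rw [abs_sub_le_iff]
    constructor <;> [linarith [hΨb z, hΨt0 z]; linarith [hΨtb z, hΨ0 z]]
  have hfΨint : Integrable (fun z => f z * (Ψ z - Ψt z)) μ :=
    integrable_of_bdd (hfm.mul (hΨ.sub hΨt)) (M := C) (fun z => by
      rw [abs_mul, abs_of_pos (hfpos z)]
      calc f z * |Ψ z - Ψt z| ≤ 1 * C :=
        mul_le_mul (hf1 z) (hΨdiff_bd z) (abs_nonneg _) one_pos.le
      _ = C := one_mul C)
  have hgΨint : Integrable (fun z => g z * (Ψ z - Ψt z)) μ :=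
    integrable_of_bdd (hgm.mul (hΨ.sub hΨt)) (M := C) (fun z => by
      rw [abs_mul, abs_of_pos (hgpos z)]
      calc g z * |Ψ z - Ψt z| ≤ 1 * C :=
        mul_le_mul (hg1 z) (hΨdiff_bd z) (abs_nonneg _) one_pos.le
      _ = C := one_mul C)
  -- positivity of γ, γt
  have hexpC : (0:ℝ) < Real.exp (-C) := Real.exp_pos _
  have hγpos : 0 < γ := by
    rw [hγ]
    have : Real.exp (-C) = ∫ _z, Real.exp (-C) ∂μ := by simp
    calc (0:ℝ) < Real.exp (-C) := hexpC
      _ = ∫ _z, Real.exp (-C) ∂μ := this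
      _ ≤ ∫ z, Real.exp (-(Ψ z)) ∂μ :=
        integral_mono (integrable_const _) hfint
          (fun z => Real.exp_le_exp.2 (by linarith [hΨb z]))
  have hγtpos : 0 < γt := by
    rw [hγt]
    have : Real.exp (-C) = ∫ _z, Real.exp (-C) ∂μ := by simp
    calc (0:ℝ) < Real.exp (-C) := hexpC
      _ = ∫ _z, Real.exp (-C) ∂μ := this
      _ ≤ ∫ z, Real.exp (-(Ψt z)) ∂μ :=
        integral_mono (integrable_const _) hgint
          (fun z => Real.exp_le_exp.2 (by linarith [hΨtb z]))
  have hγne : γ ≠ 0 := hγpos.ne'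
  have hγtne : γt ≠ 0 := hγtpos.ne'
  set A : ℝ := Real.log γ - Real.log γt with hA
  set I1 : ℝ := ∫ z, g z * (Ψ z - Ψt z) ∂μ with hI1
  set I2 : ℝ := ∫ z, f z * (Ψ z - Ψt z) ∂μ with hI2
  -- first integral
  have e1 : (∫ z, (g z / γt) * Real.log ((g z / γt) / (f z / γ)) ∂μ)
      = (1/γt) * I1 + A := by
    have hpt : ∀ z, (g z / γt) * Real.log ((g z / γt) / (f z / γ))
        = (1/γt) * (g z * (Ψ z - Ψt z)) + (A/γt) * g z := by
      intro z
      have h1 : Real.log ((g z / γt) / (f z / γ))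
          = (Ψ z - Ψt z) + A := by
        rw [Real.log_div (by positivity) (by positivity),
            Real.log_div (hgpos z).ne' hγtne, Real.log_div (hfpos z).ne' hγne]
        simp [hg, hf, Real.log_exp, hA]
        ring
      rw [h1]; ring
    rw [integral_congr_ae (Filter.Eventually.of_forall hpt)]
    rw [integral_add (hgΨint.const_mul _) (hgint.const_mul _),
        integral_const_mul, integral_const_mul]
    have : ∫ z, g z ∂μ = γt := hγt.symm
    rw [this]
    field_simp
    rfl
  -- second integral
  have e2 : (∫ z, (f z / γ) * Real.log ((f z / γ) / (g z / γt)) ∂μ)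
      = -((1/γ) * I2) - A := by
    have hpt : ∀ z, (f z / γ) * Real.log ((f z / γ) / (g z / γt))
        = (1/γ) * (f z * -(Ψ z - Ψt z)) + (-A/γ) * f z := by
      intro z
      have h1 : Real.log ((f z / γ) / (g z / γt))
          = -(Ψ z - Ψt z) - A := by
        rw [Real.log_div (by positivity) (by positivity),
            Real.log_div (hfpos z).ne' hγne, Real.log_div (hgpos z).ne' hγtne]
        simp [hg, hf, Real.log_exp, hA]
        ring
      rw [h1]; ring
    rw [integral_congr_ae (Filter.Eventually.of_forall hpt)]
    have hint1 : Integrable (fun z => f z * -(Ψ z - Ψt z)) μ :=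
      integrable_of_bdd (hfm.mul (hΨ.sub hΨt).neg) (M := C) (fun z => by
        rw [abs_mul, abs_of_pos (hfpos z), abs_neg]
        calc f z * |Ψ z - Ψt z| ≤ 1 * C :=
          mul_le_mul (hf1 z) (hΨdiff_bd z) (abs_nonneg _) one_pos.le
        _ = C := one_mul C)
    rw [integral_add (hint1.const_mul _) (hfint.const_mul _),
        integral_const_mul, integral_const_mul]
    have hneg : ∫ z, f z * -(Ψ z - Ψt z) ∂μ = -I2 := by
      rw [hI2, ← integral_neg]
      congr 1; funext z; ring
    have : ∫ z, f z ∂μ = γ := hγ.symm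
    rw [hneg, this]
    field_simp
    ring
  rw [e1, e2]
  have key : (1/γt) * I1 + A + (-((1/γ) * I2) - A)
      = (1/γt) * (I1 - I2) + ((γ - γt)/(γ*γt)) * I2 := by
    field_simp
    ring
  rw [key]
  -- bound term 1
  have hsubint : Integrable (fun z => (g z - f z) * (Ψ z - Ψt z)) μ := by
    exact (hgΨint.sub hfΨint).congr (Filter.Eventually.of_forall (fun z => by simp; ring))
  have hI12 : I1 - I2 = ∫ z, (g z - f z) * (Ψ z - Ψt z) ∂μ := by
    rw [hI1, hI2, ← integral_sub hgΨint hfΨint]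
    congr 1; funext z; ring
  have habsint : Integrable (fun z => |g z - f z| * |Ψ z - Ψt z|) μ :=
    hsubint.abs.congr (Filter.Eventually.of_forall (fun z => by simp [abs_mul]))
  have hb1 : (1/γt) * (I1 - I2) ≤ (1/γt) * ∫ z, |g z - f z| * |Ψ z - Ψt z| ∂μ := by
    apply mul_le_mul_of_nonneg_left _ (by positivity)
    rw [hI12]
    calc ∫ z, (g z - f z) * (Ψ z - Ψt z) ∂μ
        ≤ |∫ z, (g z - f z) * (Ψ z - Ψt z) ∂μ| := le_abs_self _
      _ ≤ ∫ z, |g z - f z| * |Ψ z - Ψt z| ∂μ := by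
          simpa [Real.norm_eq_abs, abs_mul] using
            norm_integral_le_integral_norm (fun z => (g z - f z) * (Ψ z - Ψt z)) (μ := μ)
  have hb2 : ((γ - γt)/(γ*γt)) * I2
      ≤ |γ - γt| / (γ * γt) * ∫ z, f z * |Ψ z - Ψt z| ∂μ := by
    calc ((γ - γt)/(γ*γt)) * I2 ≤ |((γ - γt)/(γ*γt)) * I2| := le_abs_self _
      _ = (|γ - γt| / (γ*γt)) * |I2| := by
          rw [abs_mul, abs_div, abs_of_pos (by positivity : (0:ℝ) < γ*γt)]
      _ ≤ |γ - γt| / (γ * γt) * ∫ z, f z * |Ψ z - Ψt z| ∂μ := by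
          apply mul_le_mul_of_nonneg_left _ (by positivity)
          calc |I2| ≤ ∫ z, |f z| * |Ψ z - Ψt z| ∂μ := by
                rw [hI2]
                simpa [Real.norm_eq_abs, abs_mul] using
                  norm_integral_le_integral_norm (fun z => f z * (Ψ z - Ψt z)) (μ := μ)
            _ = ∫ z, f z * |Ψ z - Ψt z| ∂μ := by
                congr 1; funext z
                rw [abs_of_pos (hfpos z)]
  linarith [hb1, hb2]
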